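/- Let C₁ ⊂ (0,1)×[0,1], C₂ ⊂ (0,1]×[0,1], C₃ ⊂ [0,1)×[0,1] be three closed sets, pairwise at positive distance, each disjoint from the horizontal sides [0,1]×{0} and [0,1]×{1}, with C₁, C₂ disjoint from {0}×[0,1] and C₁, C₃ disjoint from {1}×[0,1]. Then there exists a continuous path in [0,1]² from the bottom side [0,1]×{0} to the top side [0,1]×{1} that avoids C₁ ∪ C₂ ∪ C₃ entirely. -/

import Mathlib

/-- The closed unit square `[0,1]² ⊂ ℝ²`. -/
def unitSq : Set (ℝ × ℝ) := Set.Icc (0,0) (1,1)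

/-- The bottom edge `[0,1] × {0}`. -/
def bottomEdge : Set (ℝ × ℝ) := {p | p.1 ∈ Set.Icc (0:ℝ) 1 ∧ p.2 = 0}

/-- The top edge `[0,1] × {1}`. -/
def topEdge : Set (ℝ × ℝ) := {p | p.1 ∈ Set.Icc (0:ℝ) 1 ∧ p.2 = 1}

/-- The left edge `{0} × [0,1]`. -/
def leftEdge : Set (ℝ × ℝ) := {p | p.1 = 0 ∧ p.2 ∈ Set.Icc (0:ℝ) 1}

/-- The right edge `{1} × [0,1]`. -/
def rightEdge : Set (ℝ × ℝ) := {p | p.1 = 1 ∧ p.2 ∈ Set.Icc (0:ℝ) 1}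

namespace Stmt18Aux

inductive Dir | U | R | D | L
deriving DecidableEq

instance : Fintype Dir :=
  Fintype.ofList [Dir.U, Dir.R, Dir.D, Dir.L] (fun x => by cases x <;> decide)

open Dir

def Dir.vec : Dir → ℤ × ℤ
  | U => (0,1) | R => (1,0) | D => (0,-1) | L => (-1,0)

def Dir.cw : Dir → Dir | U => R | R => D | D => L | L => U
def Dir.ccw : Dir → Dir | U => L | L => D | D => R | R => U

@[simp] lemma ccw_cw (d : Dir) : d.cw.ccw = d := by cases d <;> rfl
@[simp] lemma cw_ccw (d : Dir) : d.ccw.cw = d := by cases d <;> rfl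

abbrev Cell := ℤ × ℤ
abbrev Edge := (ℤ × ℤ) × Dir

def ehead (e : Edge) : ℤ × ℤ := e.1 + e.2.vec

def leftCell (e : Edge) : Cell :=
  match e.2 with
  | U => (e.1.1 - 1, e.1.2)
  | R => (e.1.1, e.1.2)
  | D => (e.1.1, e.1.2 - 1)
  | L => (e.1.1 - 1, e.1.2 - 1)

def rightCell (e : Edge) : Cell :=
  match e.2 with
  | U => (e.1.1, e.1.2)
  | R => (e.1.1, e.1.2 - 1)
  | D => (e.1.1 - 1, e.1.2 - 1)
  | L => (e.1.1 - 1, e.1.2)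

/-- 8-adjacency (kings move), allowing equality. -/
def adj8 (c c' : Cell) : Prop := |c'.1 - c.1| ≤ 1 ∧ |c'.2 - c.2| ≤ 1

/-- 4-adjacency. -/
def adj4 (c c' : Cell) : Prop := |c'.1 - c.1| + |c'.2 - c.2| = 1

lemma adj4.to8 {c c' : Cell} (h : adj4 c c') : adj8 c c' := by
  unfold adj4 adj8 at *; constructor <;> [skip; skip] <;>
    · have := abs_nonneg (c'.1 - c.1); have := abs_nonneg (c'.2 - c.2); omega

-- geometric identities about the walk
section Identities
variable (v : ℤ × ℤ) (d : Dir)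

local notation "w" => v + d.vec

lemma I1 : leftCell (w, d.cw) = rightCell (w, d) := by
  cases d <;> simp [leftCell, rightCell, Dir.cw, Dir.vec, Prod.ext_iff] <;> ring_nf <;> omega

lemma I2 : rightCell (w, d.cw) = rightCell (v, d) := by
  cases d <;> simp [leftCell, rightCell, Dir.cw, Dir.vec, Prod.ext_iff] <;> ring_nf <;> omega

lemma I3L : leftCell (w, d) = leftCell (v, d) + d.vec := by
  cases d <;> simp [leftCell, Dir.vec, Prod.ext_iff] <;> ring

lemma I3R : rightCell (w, d) = rightCell (v, d) + d.vec := by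
  cases d <;> simp [rightCell, Dir.vec, Prod.ext_iff] <;> ring

lemma I4 : leftCell (w, d.ccw) = leftCell (v, d) := by
  cases d <;> simp [leftCell, Dir.ccw, Dir.vec, Prod.ext_iff] <;> ring_nf <;> omega

lemma I5 : rightCell (w, d.ccw) = leftCell (w, d) := by
  cases d <;> simp [leftCell, rightCell, Dir.ccw, Dir.vec, Prod.ext_iff] <;> ring_nf <;> omega

lemma I6 : rightCell (w - d.cw.vec, d.cw) = leftCell (v, d) := by
  cases d <;> simp [leftCell, rightCell, Dir.cw, Dir.vec, Prod.ext_iff] <;> ring_nf <;> omega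

lemma I7a : rightCell (w - d.ccw.vec, d.ccw) = rightCell (w, d) := by
  cases d <;> simp [rightCell, Dir.ccw, Dir.vec, Prod.ext_iff] <;> ring_nf <;> omega

lemma I7b : leftCell (w - d.ccw.vec, d.ccw) = rightCell (v, d) := by
  cases d <;> simp [leftCell, rightCell, Dir.ccw, Dir.vec, Prod.ext_iff] <;> ring_nf <;> omega

lemma adjLR : adj4 (leftCell (v, d)) (rightCell (v, d)) := by
  cases d <;> simp [leftCell, rightCell, adj4] <;> omega

lemma adj_step (c : Cell) : adj4 c (c + d.vec) := by
  cases d <;> simp [adj4, Dir.vec] <;> omega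

lemma adjRL : adj4 (rightCell (v, d)) (leftCell (v, d)) := by
  cases d <;> simp [leftCell, rightCell, adj4] <;> omega

lemma adj_diag : adj8 (leftCell (v, d)) (rightCell (w, d)) := by
  cases d <;> simp [leftCell, rightCell, adj8, Dir.vec] <;> omega

end Identities

@[simp] lemma ehead_def (v : ℤ × ℤ) (d : Dir) : ehead (v, d) = v + d.vec := rfl

section Walk
variable (col : Cell → Bool)

def good (e : Edge) : Prop := col (leftCell e) = false ∧ col (rightCell e) = true

def nxt (e : Edge) : Edge :=
  if col (rightCell (ehead e, e.2)) = false then (ehead e, e.2.cw)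
  else if col (leftCell (ehead e, e.2)) = false then (ehead e, e.2)
  else (ehead e, e.2.ccw)

def prv (e : Edge) : Edge :=
  if col (rightCell (e.1 - e.2.vec, e.2)) = false then (e.1 - e.2.ccw.vec, e.2.ccw)
  else if col (leftCell (e.1 - e.2.vec, e.2)) = false then (e.1 - e.2.vec, e.2)
  else (e.1 - e.2.cw.vec, e.2.cw)

variable {col}


lemma nxt_cases (v : ℤ × ℤ) (d : Dir) :
    (col (rightCell (v + d.vec, d)) = false ∧ nxt col (v, d) = (v + d.vec, d.cw)) ∨
    (col (rightCell (v + d.vec, d)) = true ∧ col (leftCell (v + d.vec, d)) = false ∧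
      nxt col (v, d) = (v + d.vec, d)) ∨
    (col (rightCell (v + d.vec, d)) = true ∧ col (leftCell (v + d.vec, d)) = true ∧
      nxt col (v, d) = (v + d.vec, d.ccw)) := by
  unfold nxt
  rw [ehead_def]
  by_cases h1 : col (rightCell (v + d.vec, d)) = false
  · rw [if_pos h1]; exact Or.inl ⟨h1, rfl⟩
  · rw [if_neg h1]
    by_cases h2 : col (leftCell (v + d.vec, d)) = false
    · rw [if_pos h2]; exact Or.inr (Or.inl ⟨(Bool.not_eq_false _).mp h1, h2, rfl⟩)
    · rw [if_neg h2]
      exact Or.inr (Or.inr ⟨(Bool.not_eq_false _).mp h1, (Bool.not_eq_false _).mp h2, rfl⟩)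

lemma good_nxt {e : Edge} (he : good col e) : good col (nxt col e) := by
  obtain ⟨v, d⟩ := e
  rcases nxt_cases (col := col) v d with ⟨h1, hn⟩ | ⟨h1, h2, hn⟩ | ⟨h1, h2, hn⟩ <;> rw [hn]
  · exact ⟨by rw [I1]; exact h1, by rw [I2]; exact he.2⟩
  · exact ⟨h2, h1⟩
  · exact ⟨by rw [I4]; exact he.1, by rw [I5]; exact h2⟩

lemma prv_nxt {e : Edge} (he : good col e) : prv col (nxt col e) = e := by
  obtain ⟨v, d⟩ := e
  have hv : v + d.vec - d.vec = v := by ring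
  rcases nxt_cases (col := col) v d with ⟨h1, hn⟩ | ⟨h1, h2, hn⟩ | ⟨h1, h2, hn⟩ <;> rw [hn] <;>
    simp only [prv]
  · have e1 : rightCell (v + d.vec - (d.cw).vec, d.cw) = leftCell (v, d) := I6 v d
    rw [if_pos (by rw [e1]; exact he.1)]
    simp only [ccw_cw, hv]
  · simp only [hv]
    rw [if_neg (by rw [he.2]; simp), if_pos he.1]
  · have e1 : rightCell (v + d.vec - (d.ccw).vec, d.ccw) = rightCell (v + d.vec, d) := I7a v d
    have e2 : leftCell (v + d.vec - (d.ccw).vec, d.ccw) = rightCell (v, d) := I7b v d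
    rw [if_neg (by rw [e1, h1]; simp), if_neg (by rw [e2, he.2]; simp)]
    simp only [cw_ccw, hv]

lemma nxt_fst {e : Edge} : (nxt col e).1 = ehead e := by
  unfold nxt; split
  · rfl
  · split <;> rfl

/-- one step of the blocked chain -/
lemma blocked_step {e : Edge} (he : good col e) :
    Relation.ReflTransGen (fun a b => adj8 a b ∧ col b = false)
      (leftCell e) (leftCell (nxt col e)) := by
  obtain ⟨v, d⟩ := e
  rcases nxt_cases (col := col) v d with ⟨h1, hn⟩ | ⟨h1, h2, hn⟩ | ⟨h1, h2, hn⟩ <;> rw [hn]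
  · exact Relation.ReflTransGen.single ⟨by rw [I1]; exact adj_diag v d, by rw [I1]; exact h1⟩
  · refine Relation.ReflTransGen.single ⟨?_, h2⟩
    rw [I3L]; exact (adj_step d _).to8
  · rw [I4]

/-- one step of the free chain -/
lemma free_step {e : Edge} (he : good col e) :
    Relation.ReflTransGen (fun a b => adj4 a b ∧ col b = true)
      (rightCell e) (rightCell (nxt col e)) := by
  obtain ⟨v, d⟩ := e
  rcases nxt_cases (col := col) v d with ⟨h1, hn⟩ | ⟨h1, h2, hn⟩ | ⟨h1, h2, hn⟩ <;> rw [hn]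
  · rw [I2]
  · refine Relation.ReflTransGen.single ⟨?_, h1⟩
    rw [I3R]; exact adj_step d _
  · rw [I5]
    refine Relation.ReflTransGen.head ⟨?_, h1⟩ (Relation.ReflTransGen.single ⟨?_, h2⟩)
    · rw [I3R]; exact adj_step d _
    · exact adjRL (v + d.vec) d

end Walk


section Grid

variable (n : ℤ) (colIn : Cell → Bool)

/-- extended coloring: outside columns blocked, outside rows free. -/
def bcol (c : Cell) : Bool :=
  if c.1 < 0 ∨ n ≤ c.1 then false
  else if c.2 < 0 ∨ n ≤ c.2 then true
  else colIn c

variable {n colIn}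

lemma bcol_true {c : Cell} (h : bcol n colIn c = true) : 0 ≤ c.1 ∧ c.1 < n := by
  unfold bcol at h; split_ifs at h <;> omega

lemma bcol_out_false {c : Cell} (h : c.1 < 0 ∨ n ≤ c.1) : bcol n colIn c = false := by
  unfold bcol; rw [if_pos h]

lemma bcol_outy_true {c : Cell} (hx : 0 ≤ c.1 ∧ c.1 < n) (hy : c.2 < 0 ∨ n ≤ c.2) :
    bcol n colIn c = true := by
  unfold bcol; rw [if_neg (by omega), if_pos hy]

lemma bcol_grid {c : Cell} (hx : 0 ≤ c.1 ∧ c.1 < n) (hy : 0 ≤ c.2 ∧ c.2 < n) :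
    bcol n colIn c = colIn c := by
  unfold bcol; rw [if_neg (by omega), if_neg (by omega)]

lemma bcol_false_grid {c : Cell} (h : bcol n colIn c = false) (hx : 0 ≤ c.1 ∧ c.1 < n) :
    0 ≤ c.2 ∧ c.2 < n ∧ colIn c = false := by
  unfold bcol at h; split_ifs at h with h1 h2
  · omega
  · exact ⟨by omega, by omega, h⟩

def startEdge : Edge := ((0, -1), Dir.U)

def Stp (e : Edge) : Prop := n ≤ (rightCell e).2 ∨ n ≤ (leftCell e).1

variable (n colIn) in
def wseq : ℕ → Edge := fun k => (nxt (bcol n colIn))^[k] startEdge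

lemma wseq_succ (k : ℕ) : wseq n colIn (k+1) = nxt (bcol n colIn) (wseq n colIn k) := by
  unfold wseq; rw [Function.iterate_succ_apply']

variable (hn : 1 ≤ n)
include hn

lemma good_start : good (bcol n colIn) startEdge := by
  constructor
  · exact bcol_out_false (by norm_num [startEdge, leftCell])
  · exact bcol_outy_true (by norm_num [startEdge, rightCell]; omega)
      (by norm_num [startEdge, rightCell])

lemma good_wseq (k : ℕ) : good (bcol n colIn) (wseq n colIn k) := by
  induction k with
  | zero => exact good_start hn
  | succ k ih => rw [wseq_succ]; exact good_nxt ih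

/-- If the walk has not stopped, the `y`-coordinate of the base vertex stays `≥ -1`. -/
lemma step_y {e : Edge} (he : good (bcol n colIn) e) (hs : ¬ Stp (n := n) e)
    (hy : -1 ≤ e.1.2) : -1 ≤ (nxt (bcol n colIn) e).1.2 := by
  have h1 : (nxt (bcol n colIn) e).1 = ehead e := nxt_fst
  obtain ⟨⟨x, y⟩, d⟩ := e
  replace hy : -1 ≤ y := hy
  rw [h1]
  have hyg : (ehead ((x,y),d)).2 = y + d.vec.2 := by simp [ehead]
  rw [hyg]
  obtain ⟨hel, her⟩ := he
  cases d
  case U => simp [Dir.vec]; omega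
  case R => simp [Dir.vec]; omega
  case L => simp [Dir.vec]; omega
  case D =>
    simp only [Dir.vec]
    by_contra hc
    have hy2 : y = -1 := by omega
    subst hy2
    have hx := bcol_true her
    simp only [rightCell] at hx
    have hxn : x < 0 ∨ n ≤ x := by
      by_contra hx2
      push_neg at hx2
      have ht := bcol_outy_true (n := n) (colIn := colIn) (c := (x, (-1:ℤ)-1))
        (by constructor <;> [exact hx2.1; exact hx2.2]) (by norm_num)
      rw [show (leftCell ((x,(-1:ℤ)), Dir.D)) = (x, -1-1) from rfl] at hel
      rw [ht] at hel
      cases hel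
    refine hs (Or.inr ?_)
    rw [show (leftCell ((x,(-1:ℤ)), Dir.D)) = (x, -1-1) from rfl]
    dsimp only
    omega

/-- confinement of non-stopped good edges with `y ≥ -1`. -/
lemma conf {e : Edge} (he : good (bcol n colIn) e) (hs : ¬ Stp (n := n) e)
    (hy : -1 ≤ e.1.2) : 0 ≤ e.1.1 ∧ e.1.1 ≤ n ∧ -1 ≤ e.1.2 ∧ e.1.2 ≤ n := by
  obtain ⟨⟨x, y⟩, d⟩ := e
  replace hy : -1 ≤ y := hy
  obtain ⟨hel, her⟩ := he
  have hx := bcol_true her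
  have hns : ¬ (n ≤ (rightCell ((x,y),d)).2) := fun h => hs (Or.inl h)
  refine ⟨?_, ?_, hy, ?_⟩ <;> cases d <;>
    simp only [rightCell] at hx hns <;> dsimp only <;> omega


lemma prv_start : prv (bcol n colIn) startEdge = ((0, -2), Dir.U) := by
  unfold prv startEdge
  have h1 : bcol n colIn (rightCell (((0:ℤ),(-1:ℤ)) - (Dir.U).vec, Dir.U)) = true := by
    refine bcol_outy_true ?_ ?_ <;> norm_num [rightCell, Dir.vec] <;> omega
  have h2 : bcol n colIn (leftCell (((0:ℤ),(-1:ℤ)) - (Dir.U).vec, Dir.U)) = false := by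
    refine bcol_out_false ?_
    norm_num [leftCell, Dir.vec]
  rw [if_neg (by rw [h1]; simp), if_pos h2]
  norm_num [Dir.vec]

lemma exists_stop : ∃ k, Stp (n := n) (wseq n colIn k) := by
  by_contra h
  push_neg at h
  have hy : ∀ k, -1 ≤ (wseq n colIn k).1.2 := by
    intro k
    induction k with
    | zero => norm_num [wseq, startEdge]
    | succ k ih => rw [wseq_succ]; exact step_y hn (good_wseq hn k) (h k) ih
  have hbox : ∀ k, (wseq n colIn k).1 ∈ Finset.Icc ((0:ℤ),(-1:ℤ)) ((n:ℤ),(n:ℤ)) := by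
    intro k
    have hc := conf hn (good_wseq hn k) (h k) (hy k)
    rw [Finset.mem_Icc]
    constructor <;> rw [Prod.le_def] <;> constructor <;> simp <;> omega
  have hps : ∀ k, wseq n colIn (k+1) ≠ startEdge := by
    intro k hk
    have h2 : wseq n colIn k = prv (bcol n colIn) startEdge := by
      rw [← hk, wseq_succ, prv_nxt (good_wseq hn k)]
    rw [prv_start hn] at h2
    have h3 := hy k
    rw [h2] at h3
    norm_num at h3
  have hinj : ∀ a b, wseq n colIn a = wseq n colIn b → a = b := by
    intro a
    induction a with
    | zero =>
      intro b hb
      cases b with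
      | zero => rfl
      | succ b => exact absurd hb.symm (hps b)
    | succ a ih =>
      intro b hb
      cases b with
      | zero => exact absurd hb (hps a)
      | succ b =>
        have h2 : wseq n colIn a = wseq n colIn b := by
          have h3 := congrArg (prv (bcol n colIn)) hb
          rwa [wseq_succ, wseq_succ, prv_nxt (good_wseq hn a),
            prv_nxt (good_wseq hn b)] at h3
        rw [ih b h2]
  classical
  let S := (Finset.Icc ((0:ℤ),(-1:ℤ)) ((n:ℤ),(n:ℤ))) ×ˢ (Finset.univ : Finset Dir)
  have hmem : ∀ k, wseq n colIn k ∈ S :=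
    fun k => Finset.mem_product.mpr ⟨hbox k, Finset.mem_univ _⟩
  have hcard := Finset.card_le_card_of_injOn (fun k => wseq n colIn k)
      (s := Finset.range (S.card + 1)) (t := S) (fun k _ => hmem k)
      (fun a _ b _ hab => hinj a b hab)
  rw [Finset.card_range] at hcard
  omega

lemma chainB (k : ℕ) :
    Relation.ReflTransGen (fun a b => adj8 a b ∧ bcol n colIn b = false)
      ((-1 : ℤ), (-1 : ℤ)) (leftCell (wseq n colIn k)) := by
  induction k with
  | zero => rw [show leftCell (wseq n colIn 0) = ((-1:ℤ),(-1:ℤ)) from rfl]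
  | succ k ih => rw [wseq_succ]; exact ih.trans (blocked_step (good_wseq hn k))

lemma chainF (k : ℕ) :
    Relation.ReflTransGen (fun a b => adj4 a b ∧ bcol n colIn b = true)
      ((0 : ℤ), (-1 : ℤ)) (rightCell (wseq n colIn k)) := by
  induction k with
  | zero => rw [show rightCell (wseq n colIn 0) = ((0:ℤ),(-1:ℤ)) from rfl]
  | succ k ih => rw [wseq_succ]; exact ih.trans (free_step (good_wseq hn k))

end Grid

section Crossing

lemma chain_all {α : Type*} {r : α → α → Prop} {P : α → Prop}
    (hP : ∀ x y, r x y → P y) :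
    ∀ {a : α} {l : List α}, List.Chain r a l → ∀ x ∈ l, P x := by
  intro a l
  induction l generalizing a with
  | nil => intro _ x hx; cases hx
  | cons b l ih =>
    intro hch x hx
    rcases List.chain_cons.mp hch with ⟨hab, hbl⟩
    rcases List.mem_cons.mp hx with rfl | hx
    · exact hP _ _ hab
    · exact ih hbl x hx

/-- Discrete intermediate value extraction. -/
lemma crossing {α : Type*} (R : α → α → Prop) (g : α → ℤ) (n : ℤ) (hn : 1 ≤ n)
    (hR : ∀ a b, R a b → |g b - g a| ≤ 1)
    (l : List α) (hl : l ≠ []) (hch : l.Chain' R)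
    (h0 : g (l.head hl) < 0) (h1 : n ≤ g (l.getLast hl)) :
    ∃ (m : List α) (hm : m ≠ []), m.Chain' R ∧ (∀ x ∈ m, x ∈ l ∧ 0 ≤ g x ∧ g x < n) ∧
      g (m.head hm) = 0 ∧ g (m.getLast hm) = n - 1 := by
  classical
  set a := l.head hl with ha
  set gv : ℕ → ℤ := fun i => g (l.getD i a) with hgv
  have hlen : 0 < l.length := List.length_pos_iff.mpr hl
  have hgv0 : gv 0 < 0 := by
    rw [hgv]
    simp only []
    rw [List.getD_eq_getElem l a hlen, ← List.head_eq_getElem hl]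
    exact h0
  have hgvlast : n ≤ gv (l.length - 1) := by
    rw [hgv]
    simp only []
    rw [List.getD_eq_getElem l a (by omega), ← List.getLast_eq_getElem hl]
    exact h1
  have hstep : ∀ i, i + 1 < l.length → |gv (i+1) - gv i| ≤ 1 := by
    intro i hi
    have hc := List.isChain_iff_getElem.mp hch i (by omega)
    have e1 : l.getD i a = l.get ⟨i, by omega⟩ := List.getD_eq_getElem l a (by omega)
    have e2 : l.getD (i+1) a = l.get ⟨i+1, by omega⟩ := List.getD_eq_getElem l a (by omega)
    rw [hgv]
    simp only []
    rw [e1, e2]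
    exact hR _ _ hc
  -- least index reaching n - 1
  have hex : ∃ j, j < l.length ∧ n - 1 ≤ gv j := ⟨l.length - 1, by omega, by omega⟩
  let j := Nat.find hex
  obtain ⟨hjlt, hjge⟩ : j < l.length ∧ n - 1 ≤ gv j := Nat.find_spec hex
  have hj0 : j ≠ 0 := by
    intro h
    rw [h] at hjge
    omega
  have hjmin : ∀ k, k < j → gv k < n - 1 := by
    intro k hk
    have := Nat.find_min hex hk
    push_neg at this
    exact this (by omega)
  have hjeq : gv j = n - 1 := by
    have h2 := hjmin (j - 1) (by omega)
    have h3 := hstep (j-1) (by omega)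
    rw [show j - 1 + 1 = j by omega] at h3
    rcases abs_le.mp h3 with ⟨h3a, h3b⟩
    omega
  -- greatest index ≤ j with gv ≤ 0
  let i := Nat.findGreatest (fun i => gv i ≤ 0) j
  have hile : i ≤ j := Nat.findGreatest_le j
  have hi0 : gv i ≤ 0 := Nat.findGreatest_spec (P := fun k => gv k ≤ 0) (Nat.zero_le j) hgv0.le
  have himax : ∀ k, i < k → k ≤ j → 0 < gv k := by
    intro k h2 h3
    have := Nat.findGreatest_is_greatest (P := fun i => gv i ≤ 0) h2 h3
    omega
  have hieq : gv i = 0 := by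
    rcases eq_or_lt_of_le hi0 with h2 | h2
    · exact h2
    · exfalso
      have hij : i < j := by
        rcases eq_or_lt_of_le hile with h3 | h3
        · rw [h3] at h2; omega
        · exact h3
      have h4 := himax (i+1) (by omega) (by omega)
      have h5 := hstep i (by omega)
      rcases abs_le.mp h5 with ⟨h5a, h5b⟩
      omega
  have hmid : ∀ k, i ≤ k → k ≤ j → 0 ≤ gv k ∧ gv k < n := by
    intro k h2 h3
    have hlow : 0 ≤ gv k := by
      rcases eq_or_lt_of_le h2 with h4 | h4
      · rw [← h4]; omega
      · have := himax k h4 h3; omega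
    have hhigh : gv k < n := by
      rcases eq_or_lt_of_le h3 with h5 | h5
      · rw [h5]; omega
      · have := hjmin k h5; omega
    exact ⟨hlow, hhigh⟩
  refine ⟨(List.range (j - i + 1)).map (fun t => l.getD (i + t) a), by simp, ?_, ?_, ?_, ?_⟩
  · show List.IsChain _ _
    rw [List.isChain_iff_getElem]
    intro t ht
    simp only [List.length_map, List.length_range] at ht
    have e1 : ∀ (s : ℕ) (hs : s < j - i + 1),
        ((List.range (j - i + 1)).map (fun t => l.getD (i + t) a)).get
          ⟨s, by simp [List.length_map, List.length_range]; omega⟩ = l.getD (i + s) a := by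
      intro s hs
      rw [List.get_eq_getElem]
      rw [List.getElem_map]
      rw [List.getElem_range]
    show R (((List.range (j - i + 1)).map (fun t => l.getD (i + t) a)).get ⟨t, by simp; omega⟩)
      (((List.range (j - i + 1)).map (fun t => l.getD (i + t) a)).get ⟨t+1, by simp; omega⟩)
    rw [e1 t (by omega), e1 (t+1) (by omega)]
    have hi1 : i + t + 1 < l.length := by omega
    have e2 : l.getD (i + t) a = l.get ⟨i + t, by omega⟩ := by
      rw [List.get_eq_getElem]; exact List.getD_eq_getElem l a (by omega)
    have e3 : l.getD (i + (t+1)) a = l.get ⟨i + t + 1, by omega⟩ := by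
      rw [List.get_eq_getElem, show i + (t+1) = i + t + 1 by omega]
      exact List.getD_eq_getElem l a (by omega)
    rw [e2, e3]
    exact List.isChain_iff_getElem.mp hch (i + t) (by omega)
  · intro x hx
    rcases List.mem_map.mp hx with ⟨t, ht, rfl⟩
    rw [List.mem_range] at ht
    have h2 : i + t ≤ j := by omega
    have h3 : i + t < l.length := by omega
    have e2 : l.getD (i + t) a = l.get ⟨i + t, h3⟩ := by
      rw [List.get_eq_getElem]; exact List.getD_eq_getElem l a h3
    refine ⟨by rw [e2]; exact List.get_mem l _, ?_⟩
    have := hmid (i + t) (by omega) h2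
    rw [hgv] at this
    exact this
  · rw [List.head_eq_getElem]
    rw [List.getElem_map]
    rw [List.getElem_range]
    rw [show i + 0 = i by omega]
    exact hieq
  · rw [List.getLast_eq_getElem]
    simp only [List.length_map, List.length_range]
    rw [List.getElem_map, List.getElem_range]
    rw [show j - i + 1 - 1 = j - i by omega, show i + (j - i) = j by omega]
    exact hjeq

end Crossing


/-- Steinhaus chessboard duality: either a 4-connected "free" chain joins the bottom row
to the top row, or an 8-connected "blocked" chain joins the left column to the right
column of the `n × n` grid. -/
theorem gridLemma (n : ℤ) (hn : 1 ≤ n) (colIn : Cell → Bool) :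
    (∃ (m : List Cell) (hm : m ≠ []), m.Chain' adj4 ∧
       (∀ c ∈ m, colIn c = true ∧ 0 ≤ c.1 ∧ c.1 < n ∧ 0 ≤ c.2 ∧ c.2 < n) ∧
       (m.head hm).2 = 0 ∧ (m.getLast hm).2 = n - 1) ∨
    (∃ (m : List Cell) (hm : m ≠ []), m.Chain' adj8 ∧
       (∀ c ∈ m, colIn c = false ∧ 0 ≤ c.1 ∧ c.1 < n ∧ 0 ≤ c.2 ∧ c.2 < n) ∧
       (m.head hm).1 = 0 ∧ (m.getLast hm).1 = n - 1) := by
  obtain ⟨k, hk⟩ := exists_stop (n := n) (colIn := colIn) hn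
  rcases hk with hkR | hkL
  · -- free chain from bottom to top
    left
    obtain ⟨l, hchain, hlast⟩ := List.exists_isChain_cons_of_relationReflTransGen
      (chainF (n := n) (colIn := colIn) hn k)
    have hLne : (((0:ℤ),(-1:ℤ)) :: l) ≠ [] := by simp
    have hall : ∀ x ∈ (((0:ℤ),(-1:ℤ)) :: l), bcol n colIn x = true := by
      intro x hx
      rcases List.mem_cons.mp hx with rfl | hx
      · exact bcol_outy_true (by constructor <;> simp <;> omega) (by simp)
      · exact chain_all (fun a b h => h.2) hchain x hx
    have hch' : (((0:ℤ),(-1:ℤ)) :: l).Chain' adj4 :=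
      List.Chain.imp (fun a b h => h.1) hchain
    have h0 : ((((0:ℤ),(-1:ℤ)) :: l).head hLne).2 < 0 := by norm_num
    have h1 : n ≤ ((((0:ℤ),(-1:ℤ)) :: l).getLast hLne).2 := by
      rw [hlast]; exact hkR
    obtain ⟨m, hm, hmch, hmmem, hmhead, hmlast⟩ :=
      crossing adj4 (fun c => c.2) n hn
        (fun a b h => by
          unfold adj4 at h
          have := abs_nonneg (b.1 - a.1)
          linarith)
        _ hLne hch' h0 h1
    refine ⟨m, hm, hmch, ?_, hmhead, hmlast⟩
    intro c hc
    obtain ⟨hcl, hc2⟩ := hmmem c hc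
    have hb := hall c hcl
    have hx := bcol_true hb
    have := bcol_grid (n := n) (colIn := colIn) hx ⟨hc2.1, hc2.2⟩
    rw [this] at hb
    exact ⟨hb, hx.1, hx.2, hc2.1, hc2.2⟩
  · -- blocked chain from left to right
    right
    obtain ⟨l, hchain, hlast⟩ := List.exists_isChain_cons_of_relationReflTransGen
      (chainB (n := n) (colIn := colIn) hn k)
    have hLne : (((-1:ℤ),(-1:ℤ)) :: l) ≠ [] := by simp
    have hall : ∀ x ∈ (((-1:ℤ),(-1:ℤ)) :: l), bcol n colIn x = false := by
      intro x hx
      rcases List.mem_cons.mp hx with rfl | hx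
      · exact bcol_out_false (by norm_num)
      · exact chain_all (fun a b h => h.2) hchain x hx
    have hch' : (((-1:ℤ),(-1:ℤ)) :: l).Chain' adj8 :=
      List.Chain.imp (fun a b h => h.1) hchain
    have h0 : ((((-1:ℤ),(-1:ℤ)) :: l).head hLne).1 < 0 := by norm_num
    have h1 : n ≤ ((((-1:ℤ),(-1:ℤ)) :: l).getLast hLne).1 := by
      rw [hlast]; exact hkL
    obtain ⟨m, hm, hmch, hmmem, hmhead, hmlast⟩ :=
      crossing adj8 (fun c => c.1) n hn (fun a b h => h.1) _ hLne hch' h0 h1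
    refine ⟨m, hm, hmch, ?_, hmhead, hmlast⟩
    intro c hc
    obtain ⟨hcl, hc1⟩ := hmmem c hc
    have hb := hall c hcl
    obtain ⟨hy1, hy2, hcolIn⟩ := bcol_false_grid hb ⟨hc1.1, hc1.2⟩
    exact ⟨hcolIn, hc1.1, hc1.2, hy1, hy2⟩


section Geometry
open Set

/-- The closed cell of a lattice square, at scale `1/N`. -/
noncomputable def cellSet (N : ℤ) (c : Cell) : Set (ℝ × ℝ) :=
  Icc (((c.1 : ℝ)) / N, ((c.2 : ℝ)) / N) ((((c.1 : ℝ)) + 1) / N, (((c.2 : ℝ)) + 1) / N)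

noncomputable def center (N : ℤ) (c : Cell) : ℝ × ℝ :=
  (((c.1 : ℝ) + 1/2) / N, ((c.2 : ℝ) + 1/2) / N)

variable {N : ℤ}

lemma mem_cellSet {p : ℝ × ℝ} {c : Cell} :
    p ∈ cellSet N c ↔ ((c.1 : ℝ)) / N ≤ p.1 ∧ p.1 ≤ (((c.1 : ℝ)) + 1) / N ∧
      ((c.2 : ℝ)) / N ≤ p.2 ∧ p.2 ≤ (((c.2 : ℝ)) + 1) / N := by
  unfold cellSet
  rw [Set.mem_Icc, Prod.le_def, Prod.le_def]
  tauto

lemma center_mem (hN : (0:ℝ) < N) (c : Cell) : center N c ∈ cellSet N c := by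
  rw [mem_cellSet]
  unfold center
  refine ⟨?_, ?_, ?_, ?_⟩ <;> rw [div_le_div_iff_of_pos_right hN] <;> norm_num
  
lemma cellSet_convex (c : Cell) : Convex ℝ (cellSet N c) := convex_Icc _ _

lemma seg_mem (hN : (0:ℝ) < N) {c c' : Cell} (h1 : |c'.1 - c.1| ≤ 1) (h2 : |c'.2 - c.2| ≤ 1)
    {t : ℝ} (ht0 : 0 ≤ t) (ht1 : t ≤ 1) :
    (1 - t) • center N c + t • center N c' ∈ cellSet N c ∪ cellSet N c' := by
  rcases abs_le.mp h1 with ⟨h1a, h1b⟩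
  rcases abs_le.mp h2 with ⟨h2a, h2b⟩
  have hd1a : (-1 : ℝ) ≤ (c'.1 : ℝ) - (c.1 : ℝ) := by push_cast [← Int.cast_sub]; exact_mod_cast h1a
  have hd1b : ((c'.1 : ℝ)) - (c.1 : ℝ) ≤ 1 := by exact_mod_cast h1b
  have hd2a : (-1 : ℝ) ≤ (c'.2 : ℝ) - (c.2 : ℝ) := by exact_mod_cast h2a
  have hd2b : ((c'.2 : ℝ)) - (c.2 : ℝ) ≤ 1 := by exact_mod_cast h2b
  have hx : ((1 - t) • center N c + t • center N c').1
      = ((1-t) * ((c.1:ℝ) + 1/2) + t * ((c'.1:ℝ) + 1/2)) / N := by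
    simp [center, Prod.fst_add, Prod.smul_fst, smul_eq_mul]
    ring
  have hy : ((1 - t) • center N c + t • center N c').2
      = ((1-t) * ((c.2:ℝ) + 1/2) + t * ((c'.2:ℝ) + 1/2)) / N := by
    simp [center, Prod.snd_add, Prod.smul_snd, smul_eq_mul]
    ring
  rcases le_total t (1/2) with ht | ht
  · left
    rw [mem_cellSet, hx, hy]
    refine ⟨?_, ?_, ?_, ?_⟩ <;> rw [div_le_div_iff_of_pos_right hN] <;> nlinarith
  · right
    rw [mem_cellSet, hx, hy]
    refine ⟨?_, ?_, ?_, ?_⟩ <;> rw [div_le_div_iff_of_pos_right hN] <;> nlinarith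

noncomputable def segPath (a b : ℝ × ℝ) : Path a b where
  toFun t := (1 - (t : ℝ)) • a + (t : ℝ) • b
  continuous_toFun := by fun_prop
  source' := by norm_num
  target' := by norm_num

lemma segPath_mem_convex {a b : ℝ × ℝ} {s : Set (ℝ × ℝ)} (hs : Convex ℝ s)
    (ha : a ∈ s) (hb : b ∈ s) (t : unitInterval) : segPath a b t ∈ s := by
  exact hs ha hb (by linarith [t.2.2] : (0:ℝ) ≤ 1 - (t:ℝ)) t.2.1 (by ring)

lemma exists_path (hN : (0:ℝ) < N) :
    ∀ (l : List Cell) (c : Cell), List.Chain adj8 c l →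
    ∃ p : Path (center N c) (center N ((c::l).getLast (List.cons_ne_nil c l))),
      ∀ t, p t ∈ ⋃ x ∈ (c :: l), cellSet N x := by
  intro l
  induction l with
  | nil =>
    intro c _
    refine ⟨Path.refl _, fun t => ?_⟩
    simp only [Path.refl_apply, List.mem_singleton, Set.mem_iUnion]
    exact ⟨c, by simp, center_mem hN c⟩
  | cons b l ih =>
    intro c hch
    rcases List.chain_cons.mp hch with ⟨hcb, hbl⟩
    obtain ⟨p, hp⟩ := ih b hbl
    have hlast : ((c :: b :: l).getLast (List.cons_ne_nil _ _))
        = ((b :: l).getLast (List.cons_ne_nil _ _)) := List.getLast_cons _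
    rw [hlast]
    refine ⟨(segPath (center N c) (center N b)).trans p, fun t => ?_⟩
    have hmem : ((segPath (center N c) (center N b)).trans p) t ∈
        Set.range ((segPath (center N c) (center N b)).trans p) := Set.mem_range_self t
    rw [Path.trans_range] at hmem
    rcases hmem with hmem | hmem
    · obtain ⟨s, hs⟩ := hmem
      have h2 := seg_mem hN (c := c) (c' := b) hcb.1 hcb.2 s.2.1 s.2.2
      rw [show ((1 - (s:ℝ)) • center N c + (s:ℝ) • center N b)
          = (segPath (center N c) (center N b)) s from rfl, hs] at h2
      rcases h2 with h | h
      · exact Set.mem_iUnion₂.mpr ⟨c, by simp, h⟩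
      · exact Set.mem_iUnion₂.mpr ⟨b, by simp, h⟩
    · obtain ⟨s, hs⟩ := hmem
      have := hp s
      rw [hs] at this
      rcases Set.mem_iUnion₂.mp this with ⟨x, hx, hxx⟩
      exact Set.mem_iUnion₂.mpr ⟨x, List.mem_cons_of_mem c hx, hxx⟩

/-- positive separation between a compact set and a disjoint closed set -/
lemma sep_pos {K F : Set (ℝ × ℝ)} (hK : IsCompact K) (hF : IsClosed F)
    (hd : Disjoint K F) : ∃ δ : ℝ, 0 < δ ∧ ∀ p ∈ K, ∀ q ∈ F, δ ≤ dist p q := by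
  rcases K.eq_empty_or_nonempty with rfl | hne
  · exact ⟨1, one_pos, by simp⟩
  rcases F.eq_empty_or_nonempty with rfl | hFne
  · exact ⟨1, one_pos, by simp⟩
  obtain ⟨p₀, hp₀, hmin⟩ := hK.exists_isMinOn hne
    ((Metric.continuous_infDist_pt F).continuousOn)
  refine ⟨Metric.infDist p₀ F, ?_, ?_⟩
  · have hp₀F : p₀ ∉ closure F := by
      rw [hF.closure_eq]
      exact fun h => (hd.ne_of_mem hp₀ h) rfl
    rw [hF.closure_eq] at hp₀F
    exact (hF.notMem_iff_infDist_pos hFne).mp hp₀F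
  · intro p hp q hq
    exact le_trans (hmin hp) (Metric.infDist_le_dist_of_mem hq)

end Geometry


section Final
open Set

lemma isClosed_leftEdge : IsClosed leftEdge := by
  have : leftEdge = ({(0:ℝ)} : Set ℝ) ×ˢ (Icc (0:ℝ) 1) := by
    ext p
    rw [Set.mem_prod]
    simp [leftEdge]
  rw [this]
  exact (isClosed_singleton).prod isClosed_Icc

lemma isClosed_rightEdge : IsClosed rightEdge := by
  have : rightEdge = ({(1:ℝ)} : Set ℝ) ×ˢ (Icc (0:ℝ) 1) := by
    ext p
    rw [Set.mem_prod]
    simp [rightEdge]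
  rw [this]
  exact (isClosed_singleton).prod isClosed_Icc

lemma cellSet_subset_unitSq {N : ℤ} (hN : (0:ℝ) < N) {c : Cell}
    (h1 : 0 ≤ c.1) (h2 : c.1 < N) (h3 : 0 ≤ c.2) (h4 : c.2 < N) :
    cellSet N c ⊆ unitSq := by
  intro p hp
  rw [mem_cellSet] at hp
  have hc1 : (0:ℝ) ≤ (c.1:ℝ) := by exact_mod_cast h1
  have hc2 : (c.1:ℝ) + 1 ≤ (N:ℝ) := by exact_mod_cast h2
  have hc3 : (0:ℝ) ≤ (c.2:ℝ) := by exact_mod_cast h3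
  have hc4 : (c.2:ℝ) + 1 ≤ (N:ℝ) := by exact_mod_cast h4
  constructor
  · rw [Prod.le_def]
    constructor
    · exact le_trans (div_nonneg hc1 hN.le) hp.1
    · exact le_trans (div_nonneg hc3 hN.le) hp.2.2.1
  · rw [Prod.le_def]
    constructor
    · exact le_trans hp.2.1 ((div_le_one hN).mpr hc2)
    · exact le_trans hp.2.2.2 ((div_le_one hN).mpr hc4)


lemma coord_close {N : ℤ} (hN : (0:ℝ) < N) {A B : ℤ} (hAB : |B - A| ≤ 1) {x y : ℝ}
    (hx1 : (A:ℝ)/N ≤ x) (hx2 : x ≤ ((A:ℝ)+1)/N)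
    (hy1 : (B:ℝ)/N ≤ y) (hy2 : y ≤ ((B:ℝ)+1)/N) :
    |x - y| ≤ 2/N := by
  rcases abs_le.mp hAB with ⟨h1, h2⟩
  have h1' : (-1:ℝ) ≤ (B:ℝ) - A := by exact_mod_cast h1
  have h2' : (B:ℝ) - (A:ℝ) ≤ 1 := by exact_mod_cast h2
  have e1 : ((A:ℝ) + 1)/N - (B:ℝ)/N = ((A:ℝ) + 1 - B)/N := by ring
  have e2 : (A:ℝ)/N - ((B:ℝ)+1)/N = ((A:ℝ) - B - 1)/N := by ring
  have b1 : ((A:ℝ) + 1 - B)/N ≤ 2/N := by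
    rw [div_le_div_iff_of_pos_right hN]; linarith
  have b2 : (-2:ℝ)/N ≤ ((A:ℝ) - B - 1)/N := by
    rw [div_le_div_iff_of_pos_right hN]; linarith
  rw [abs_le]
  constructor
  · have : (-2:ℝ)/N = -(2/N) := by ring
    rw [← this]
    calc (-2:ℝ)/N ≤ ((A:ℝ) - B - 1)/N := b2
    _ = (A:ℝ)/N - ((B:ℝ)+1)/N := e2.symm
    _ ≤ x - y := by linarith
  · calc x - y ≤ ((A:ℝ) + 1)/N - (B:ℝ)/N := by linarith
    _ = ((A:ℝ) + 1 - B)/N := e1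
    _ ≤ 2/N := b1

lemma blocked_contradiction
    (C₁ C₂ C₃ : Set (ℝ × ℝ)) (ε δL δR : ℝ) (N : ℤ)
    (hN : (0:ℝ) < N) (hNε : 2 / (N:ℝ) < ε) (hNL : 1 / (N:ℝ) < δL) (hNR : 1 / (N:ℝ) < δR)
    (hsub : C₁ ∪ C₂ ∪ C₃ ⊆ unitSq)
    (hsep₁₃ : ∀ p ∈ C₁, ∀ q ∈ C₃, ε ≤ dist p q)
    (hsep₂₃ : ∀ p ∈ C₂, ∀ q ∈ C₃, ε ≤ dist p q)
    (hδL : ∀ p ∈ C₁ ∪ C₂, ∀ q ∈ leftEdge, δL ≤ dist p q)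
    (hδR : ∀ p ∈ C₁ ∪ C₃, ∀ q ∈ rightEdge, δR ≤ dist p q)
    (m : List Cell) (hm : m ≠ []) (hch : m.Chain' adj8)
    (hmem : ∀ c ∈ m, (cellSet N c ∩ (C₁ ∪ C₂ ∪ C₃)).Nonempty ∧
      0 ≤ c.1 ∧ c.1 < N ∧ 0 ≤ c.2 ∧ c.2 < N)
    (hhead : (m.head hm).1 = 0) (hlast : (m.getLast hm).1 = N - 1) : False := by
  set C := C₁ ∪ C₂ ∪ C₃ with hC
  -- the head cell only meets C₃
  have hQhead : ∀ p ∈ cellSet N (m.head hm) ∩ C, p ∈ C₃ := by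
    intro p hp
    obtain ⟨hpc, hpC⟩ := hp
    rw [mem_cellSet] at hpc
    rw [hhead] at hpc
    have hsq := hsub hpC
    obtain ⟨hsq1, hsq2⟩ := hsq
    rw [Prod.le_def] at hsq1 hsq2
    have hqe : ((0:ℝ), p.2) ∈ leftEdge := ⟨rfl, hsq1.2, hsq2.2⟩
    have hdist : dist p ((0:ℝ), p.2) < δL := by
      rw [Prod.dist_eq]
      apply max_lt
      · rw [Real.dist_eq]
        have h0 : (0:ℝ) ≤ p.1 := by
          have := hpc.1; norm_num at this; linarith
        have h1 : p.1 ≤ 1 / N := by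
          have := hpc.2.1; norm_num at this; linarith
        rw [abs_of_nonneg (by simpa using h0)]
        simpa using lt_of_le_of_lt h1 hNL
      · simpa using lt_of_le_of_lt (le_of_eq (dist_self p.2)) (lt_of_le_of_lt (by positivity) hNL)
    rcases hpC with hp12 | hp3
    · exact absurd (hδL p hp12 _ hqe) (by linarith)
    · exact hp3
  -- propagation along the chain
  have hprop : ∀ (l : List Cell), l.Chain' adj8 →
      (∀ c ∈ l, (cellSet N c ∩ C).Nonempty) →
      (∀ hne : l ≠ [], (∀ p ∈ cellSet N (l.head hne) ∩ C, p ∈ C₃)) →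
      ∀ c ∈ l, ∀ p ∈ cellSet N c ∩ C, p ∈ C₃ := by
    intro l
    induction l with
    | nil => intro _ _ _ c hc; cases hc
    | cons a l ih =>
      intro hch2 hne2 hQ c hc
      rcases List.mem_cons.mp hc with rfl | hc
      · exact hQ (List.cons_ne_nil _ _)
      · cases l with
        | nil => cases hc
        | cons b l2 =>
          rcases List.isChain_cons_cons.mp hch2 with ⟨hab, hbl⟩
          refine ih hbl (fun c hcl => hne2 c (List.mem_cons_of_mem a hcl)) ?_ c hc
          intro _ p' hp'
          -- transfer color from a to b
          obtain ⟨p, hpc, hpC⟩ := hne2 a (by simp)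
          have hpC₃ : p ∈ C₃ := hQ (List.cons_ne_nil _ _) p ⟨hpc, hpC⟩
          obtain ⟨hp'c, hp'C⟩ := hp'
          have hd : dist p p' ≤ 2 / N := by
            rw [mem_cellSet] at hpc hp'c
            rw [Prod.dist_eq]
            apply max_le
            · rw [Real.dist_eq]
              exact coord_close hN hab.1 hpc.1 hpc.2.1 hp'c.1 hp'c.2.1
            · rw [Real.dist_eq]
              exact coord_close hN hab.2 hpc.2.2.1 hpc.2.2.2 hp'c.2.2.1 hp'c.2.2.2
          have hdε : dist p' p < ε := by
            rw [dist_comm]; exact lt_of_le_of_lt hd hNε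
          rcases hp'C with hp12 | hp3
          · rcases hp12 with hp1 | hp2
            · exact absurd (hsep₁₃ p' hp1 p hpC₃) (by linarith)
            · exact absurd (hsep₂₃ p' hp2 p hpC₃) (by linarith)
          · exact hp3
  -- last cell gives the contradiction at the right edge
  have hQlast := hprop m hch (fun c hc => (hmem c hc).1) (fun _ => hQhead)
    (m.getLast hm) (List.getLast_mem hm)
  obtain ⟨p, hpc, hpC⟩ := (hmem (m.getLast hm) (List.getLast_mem hm)).1
  have hp3 : p ∈ C₃ := hQlast p ⟨hpc, hpC⟩
  rw [mem_cellSet, hlast] at hpc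
  have hsq := hsub hpC
  obtain ⟨hsq1, hsq2⟩ := hsq
  rw [Prod.le_def] at hsq1 hsq2
  have hqe : ((1:ℝ), p.2) ∈ rightEdge := ⟨rfl, hsq1.2, hsq2.2⟩
  have hcast : ((N - 1 : ℤ) : ℝ) = (N:ℝ) - 1 := by push_cast; ring
  have hlow : ((N:ℝ) - 1)/N ≤ p.1 := by rw [← hcast]; exact hpc.1
  have hdist : dist p ((1:ℝ), p.2) < δR := by
    rw [Prod.dist_eq]
    apply max_lt
    · rw [Real.dist_eq]
      have h1 : p.1 ≤ 1 := hsq2.1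
      have h2 : 1 - p.1 ≤ 1/N := by
        have : ((N:ℝ) - 1)/N = 1 - 1/N := by field_simp
        rw [this] at hlow
        linarith
      rw [abs_of_nonpos (by simpa using sub_nonpos.mpr h1)]
      simpa using lt_of_le_of_lt h2 hNR
    · simpa using lt_of_le_of_lt (le_of_eq (dist_self p.2)) (lt_of_le_of_lt (by positivity) hNR)
  exact absurd (hδR p (Or.inr hp3) _ hqe) (by linarith)


lemma free_path
    (C : Set (ℝ × ℝ)) (N : ℤ) (hN : (0:ℝ) < N)
    (m : List Cell) (hm : m ≠ []) (hch : m.Chain' adj4)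
    (hmem : ∀ c ∈ m, cellSet N c ∩ C = ∅ ∧ 0 ≤ c.1 ∧ c.1 < N ∧ 0 ≤ c.2 ∧ c.2 < N)
    (hhead : (m.head hm).2 = 0) (hlast : (m.getLast hm).2 = N - 1) :
    ∃ γ : ℝ → ℝ × ℝ, ContinuousOn γ (Set.Icc 0 1) ∧ γ 0 ∈ bottomEdge ∧ γ 1 ∈ topEdge ∧
      ∀ t ∈ Set.Icc (0:ℝ) 1, γ t ∈ unitSq \ C := by
  obtain ⟨hd, tl, rfl⟩ : ∃ hd tl, m = hd :: tl := by
    cases m with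
    | nil => exact absurd rfl hm
    | cons a t => exact ⟨a, t, rfl⟩
  replace hhead : hd.2 = 0 := hhead
  have hch8 : List.Chain adj8 hd tl := List.Chain.imp (fun a b h => h.to8) hch
  obtain ⟨p, hp⟩ := exists_path hN tl hd hch8
  have hlc2 : ((hd :: tl).getLast (List.cons_ne_nil hd tl)).2 = N - 1 := hlast
  set s : ℝ × ℝ := (((hd.1:ℝ) + 1/2)/N, (0:ℝ)) with hs
  set e : ℝ × ℝ := (((((hd :: tl).getLast (List.cons_ne_nil hd tl)).1:ℝ) + 1/2)/N, (1:ℝ)) with he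
  have hhd := hmem hd (by simp)
  have hlcm := hmem ((hd :: tl).getLast (List.cons_ne_nil hd tl)) (List.getLast_mem (List.cons_ne_nil hd tl))
  have hhd2 : ((hd.2 : ℝ)) = 0 := by exact_mod_cast hhead
  have hlc2' : ((((hd :: tl).getLast (List.cons_ne_nil hd tl)).2 : ℝ)) = (N:ℝ) - 1 := by rw [hlc2]; push_cast; ring
  have hs_cell : s ∈ cellSet N hd := by
    rw [mem_cellSet, hhd2]
    refine ⟨?_, ?_, ?_, ?_⟩
    · rw [div_le_div_iff_of_pos_right hN]; norm_num
    · rw [hs]; dsimp only; rw [div_le_div_iff_of_pos_right hN]; norm_num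
    · rw [hs]; dsimp only; simp [le_of_lt hN]
    · rw [hs]; dsimp only; positivity
  have he_cell : e ∈ cellSet N ((hd :: tl).getLast (List.cons_ne_nil hd tl)) := by
    rw [mem_cellSet, hlc2']
    refine ⟨?_, ?_, ?_, ?_⟩
    · rw [div_le_div_iff_of_pos_right hN]; norm_num
    · rw [he]; dsimp only; rw [div_le_div_iff_of_pos_right hN]; norm_num
    · rw [he]; dsimp only
      rw [div_le_iff₀ hN]; ring_nf; linarith
    · rw [he]; dsimp only
      rw [le_div_iff₀ hN]; ring_nf; linarith
  set P : Path s e := (segPath s (center N hd)).trans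
    (p.trans (segPath (center N ((hd :: tl).getLast (List.cons_ne_nil hd tl))) e)) with hP
  have hPmem : ∀ t : unitInterval, P t ∈ ⋃ c ∈ (hd :: tl), cellSet N c := by
    intro t
    have h1 : P t ∈ Set.range P := Set.mem_range_self t
    rw [hP, Path.trans_range] at h1
    rcases h1 with h1 | h1
    · obtain ⟨u, hu⟩ := h1
      have h2 := segPath_mem_convex (cellSet_convex hd) hs_cell (center_mem hN hd) u
      rw [hu] at h2
      exact Set.mem_iUnion₂.mpr ⟨hd, by simp, h2⟩
    · rw [Path.trans_range] at h1
      rcases h1 with h1 | h1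
      · obtain ⟨u, hu⟩ := h1
        rw [← hu]
        exact hp u
      · obtain ⟨u, hu⟩ := h1
        have h2 := segPath_mem_convex (cellSet_convex ((hd :: tl).getLast (List.cons_ne_nil hd tl))) (center_mem hN ((hd :: tl).getLast (List.cons_ne_nil hd tl))) he_cell u
        rw [hu] at h2
        exact Set.mem_iUnion₂.mpr ⟨((hd :: tl).getLast (List.cons_ne_nil hd tl)), List.getLast_mem (List.cons_ne_nil hd tl), h2⟩
  have hGsub : (⋃ c ∈ (hd :: tl), cellSet N c) ⊆ unitSq \ C := by
    intro q hq
    rcases Set.mem_iUnion₂.mp hq with ⟨c, hc, hcq⟩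
    obtain ⟨hempty, hb1, hb2, hb3, hb4⟩ := hmem c hc
    refine ⟨cellSet_subset_unitSq hN hb1 hb2 hb3 hb4 hcq, fun hqC => ?_⟩
    exact Set.eq_empty_iff_forall_notMem.mp hempty q ⟨hcq, hqC⟩
  refine ⟨fun t => P (Set.projIcc 0 1 zero_le_one t), ?_, ?_, ?_, ?_⟩
  · exact (P.continuous.comp continuous_projIcc).continuousOn
  · show P (Set.projIcc 0 1 zero_le_one 0) ∈ bottomEdge
    rw [Set.projIcc_left]
    have h0 : P ⟨0, by norm_num⟩ = s := P.source
    rw [h0]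
    refine ⟨⟨?_, ?_⟩, rfl⟩
    · have : (0:ℝ) ≤ (hd.1:ℝ) := by exact_mod_cast hhd.2.1
      positivity
    · have h2 : (hd.1:ℝ) + 1 ≤ (N:ℝ) := by exact_mod_cast hhd.2.2.1
      rw [div_le_one hN]; linarith
  · show P (Set.projIcc 0 1 zero_le_one 1) ∈ topEdge
    rw [Set.projIcc_right]
    have h0 : P ⟨1, by norm_num⟩ = e := P.target
    rw [h0]
    refine ⟨⟨?_, ?_⟩, rfl⟩
    · have : (0:ℝ) ≤ (((hd :: tl).getLast (List.cons_ne_nil hd tl)).1:ℝ) := by exact_mod_cast hlcm.2.1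
      positivity
    · have h2 : (((hd :: tl).getLast (List.cons_ne_nil hd tl)).1:ℝ) + 1 ≤ (N:ℝ) := by exact_mod_cast hlcm.2.2.1
      rw [div_le_one hN]; linarith
  · intro t _
    exact hGsub (hPmem _)

end Final

end Stmt18Aux


open Stmt18Aux in
/-- Plane-topology fact behind the Lusternik–Schnirelman argument: if `C₁, C₂, C₃` are
closed subsets of the unit square, pairwise at positive distance, none meeting the bottom
or top edge, with `C₁, C₂` disjoint from the left edge and `C₁, C₃` disjoint from the
right edge, then there is a continuous path in the square from the bottom edge to the top
edge avoiding `C₁ ∪ C₂ ∪ C₃`. -/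
theorem stmt18 (C₁ C₂ C₃ : Set (ℝ × ℝ)) (ε : ℝ) (hε : 0 < ε)
    (hcl₁ : IsClosed C₁) (hcl₂ : IsClosed C₂) (hcl₃ : IsClosed C₃)
    (hsub₁ : C₁ ⊆ unitSq) (hsub₂ : C₂ ⊆ unitSq) (hsub₃ : C₃ ⊆ unitSq)
    (hsep₁₂ : ∀ p ∈ C₁, ∀ q ∈ C₂, ε ≤ dist p q)
    (hsep₁₃ : ∀ p ∈ C₁, ∀ q ∈ C₃, ε ≤ dist p q)
    (hsep₂₃ : ∀ p ∈ C₂, ∀ q ∈ C₃, ε ≤ dist p q)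
    (hbot : Disjoint (C₁ ∪ C₂ ∪ C₃) bottomEdge)
    (htop : Disjoint (C₁ ∪ C₂ ∪ C₃) topEdge)
    (hleft : Disjoint (C₁ ∪ C₂) leftEdge)
    (hright : Disjoint (C₁ ∪ C₃) rightEdge) :
    ∃ γ : ℝ → ℝ × ℝ, ContinuousOn γ (Set.Icc 0 1) ∧
      γ 0 ∈ bottomEdge ∧ γ 1 ∈ topEdge ∧
      ∀ t ∈ Set.Icc (0:ℝ) 1, γ t ∈ unitSq \ (C₁ ∪ C₂ ∪ C₃) := by
  classical
  have hCsub : C₁ ∪ C₂ ∪ C₃ ⊆ unitSq :=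
    Set.union_subset (Set.union_subset hsub₁ hsub₂) hsub₃
  have hsqK : IsCompact unitSq := isCompact_Icc
  have hK12 : IsCompact (C₁ ∪ C₂) :=
    IsCompact.of_isClosed_subset hsqK (hcl₁.union hcl₂) (Set.union_subset hsub₁ hsub₂)
  have hK13 : IsCompact (C₁ ∪ C₃) :=
    IsCompact.of_isClosed_subset hsqK (hcl₁.union hcl₃) (Set.union_subset hsub₁ hsub₃)
  obtain ⟨δL, hδLpos, hδL⟩ := sep_pos hK12 isClosed_leftEdge hleft
  obtain ⟨δR, hδRpos, hδR⟩ := sep_pos hK13 isClosed_rightEdge hright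
  obtain ⟨Nn, hNn⟩ := exists_nat_gt (max (2/ε) (max (1/δL) (1/δR)))
  have hNpos : (0:ℝ) < ((Nn:ℤ):ℝ) := by
    have h1 : (0:ℝ) < 2/ε := by positivity
    have h2 : (2/ε : ℝ) < Nn := lt_of_le_of_lt (le_max_left _ _) hNn
    push_cast
    linarith
  have hn1 : 1 ≤ (Nn:ℤ) := by
    have : (0:ℤ) < Nn := by exact_mod_cast hNpos
    omega
  have hNε : 2/(((Nn:ℤ)):ℝ) < ε := by
    have h2 : (2/ε : ℝ) < ((Nn:ℤ):ℝ) := by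
      push_cast
      exact lt_of_le_of_lt (le_max_left _ _) hNn
    rw [div_lt_iff₀ hNpos]
    rw [div_lt_iff₀ hε] at h2
    nlinarith
  have hNL : 1/(((Nn:ℤ)):ℝ) < δL := by
    have h2 : (1/δL : ℝ) < ((Nn:ℤ):ℝ) := by
      push_cast
      exact lt_of_le_of_lt (le_trans (le_max_left _ _) (le_max_right _ _)) hNn
    rw [div_lt_iff₀ hNpos]
    rw [div_lt_iff₀ hδLpos] at h2
    nlinarith
  have hNR : 1/(((Nn:ℤ)):ℝ) < δR := by
    have h2 : (1/δR : ℝ) < ((Nn:ℤ):ℝ) := by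
      push_cast
      exact lt_of_le_of_lt (le_trans (le_max_right _ _) (le_max_right _ _)) hNn
    rw [div_lt_iff₀ hNpos]
    rw [div_lt_iff₀ hδRpos] at h2
    nlinarith
  rcases gridLemma (Nn:ℤ) hn1
      (fun c => decide (cellSet (Nn:ℤ) c ∩ (C₁ ∪ C₂ ∪ C₃) = ∅)) with
    ⟨m, hm, hch, hmem, hhead, hlast⟩ | ⟨m, hm, hch, hmem, hhead, hlast⟩
  · refine free_path (C₁ ∪ C₂ ∪ C₃) (Nn:ℤ) hNpos m hm hch ?_ hhead hlast
    intro c hc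
    obtain ⟨hcol, h1, h2, h3, h4⟩ := hmem c hc
    exact ⟨of_decide_eq_true hcol, h1, h2, h3, h4⟩
  · exfalso
    refine blocked_contradiction C₁ C₂ C₃ ε δL δR (Nn:ℤ) hNpos hNε hNL hNR hCsub
      hsep₁₃ hsep₂₃ hδL hδR m hm hch ?_ hhead hlast
    intro c hc
    obtain ⟨hcol, h1, h2, h3, h4⟩ := hmem c hc
    exact ⟨Set.nonempty_iff_ne_empty.mpr (of_decide_eq_false hcol), h1, h2, h3, h4⟩
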